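/- arXiv:2603.25917 — 5 statements merged into one kernel-verified Lean document; each statement's English description precedes it below -/
import Mathlib

section
/- If λ and μ are partitions of n, then the L¹ distance between their conjugate partitions (padded with trailing zeros to equal length) equals 2 if and only if μ can be obtained from λ by decreasing one part by 1 and increasing another part (possibly a new part of size 0) by 1, followed by reordering. -/
/-- The `i`-th entry (0-indexed) of the conjugate partition:
the number of parts of `P` that are `> i`, i.e. `≥ i+1`. -/
def conjFn {n : ℕ} (P : Nat.Partition n) : ℕ → ℕ :=
  fun i => Multiset.countP (fun p => i < p) P.parts

/-- L¹ distance between two (eventually zero) sequences of naturals. -/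
noncomputable def l1 (a b : ℕ → ℕ) : ℕ := ∑' i, Nat.dist (a i) (b i)

/-- `Transfer P Q` : `Q` is obtained from `P` by decreasing one part `a` by one and
increasing another part `b` (possibly a new part of size `0`) by one, followed by
reordering (automatic for multisets) and deletion of zero parts. -/
def Transfer {n : ℕ} (P Q : Nat.Partition n) : Prop :=
  ∃ a b : ℕ, a ∈ P.parts ∧ (b ∈ P.parts.erase a ∨ b = 0) ∧
    Q.parts = Multiset.filter (fun x => 0 < x)
      ((a - 1) ::ₘ (b + 1) ::ₘ ((P.parts.erase a).erase b))

/-- The partition graph `G n`: vertices are partitions of `n`, adjacency is a single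
elementary unit transfer between parts (symmetrized, loops removed). -/
def G (n : ℕ) : SimpleGraph (Nat.Partition n) :=
  SimpleGraph.fromRel (fun P Q => Transfer P Q)

/-- The multiset of parts of the conjugate partition of `P`. -/
def conjParts {n : ℕ} (P : Nat.Partition n) : Multiset ℕ :=
  ((Multiset.range n).map (conjFn P)).filter (fun x => 0 < x)

/-- `Q` is the conjugate partition of `P`. -/
def IsConjugate {n : ℕ} (P Q : Nat.Partition n) : Prop :=
  Q.parts = conjParts P

/-- The Ferrers translation `T_τ`, characterized by `(T_τ P)' = P' + τ'`
(see `conjFn_Tmap`). -/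
def Tmap {n k : ℕ} (τ : Nat.Partition k) (P : Nat.Partition n) : Nat.Partition (n + k) where
  parts := P.parts + τ.parts
  parts_pos := fun hx => by
    rcases Multiset.mem_add.mp hx with h | h
    · exact P.parts_pos h
    · exact τ.parts_pos h
  parts_sum := by rw [Multiset.sum_add, P.parts_sum, τ.parts_sum]

/-- `Tmap` realizes the defining property `(T_τ λ)' = λ' + τ'`. -/
theorem conjFn_Tmap {n k : ℕ} (τ : Nat.Partition k) (P : Nat.Partition n) :
    conjFn (Tmap τ P) = fun i => conjFn P i + conjFn τ i := by
  funext i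
  simp [conjFn, Tmap, Multiset.countP_add]

/-- Maximum size of a clique containing the vertex `v`. -/
noncomputable def omegaLoc {V : Type*} (G : SimpleGraph V) (v : V) : ℕ :=
  sSup {m | ∃ s : Finset V, G.IsNClique m s ∧ v ∈ s}

open Multiset in
/-- countP of `i < ·` ignores the positivity filter. -/
lemma countP_lt_filter (i : ℕ) (M : Multiset ℕ) :
    countP (fun p => i < p) (Multiset.filter (fun x => 0 < x) M)
      = countP (fun p => i < p) M := by
  rw [Multiset.countP_filter]
  exact Multiset.countP_congr rfl (fun x _ => by simp; omega)

open Multiset in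
lemma countP_decomp (i : ℕ) (M : Multiset ℕ) (hMpos : ∀ x ∈ M, 0 < x) {a b : ℕ}
    (ha : a ∈ M) (hb : b ∈ M.erase a ∨ b = 0) :
    countP (fun p => i < p) M
      = (if i < a then 1 else 0) + (if i < b then 1 else 0)
        + countP (fun p => i < p) ((M.erase a).erase b) := by
  rcases hb with hb | rfl
  · conv_lhs => rw [← Multiset.cons_erase ha, ← Multiset.cons_erase hb]
    rw [Multiset.countP_cons, Multiset.countP_cons]
    ring
  · have h0 : (0:ℕ) ∉ M.erase a := by
      intro h
      exact absurd (hMpos 0 (Multiset.mem_of_mem_erase h)) (lt_irrefl 0)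
    rw [Multiset.erase_of_notMem h0]
    conv_lhs => rw [← Multiset.cons_erase ha]
    rw [Multiset.countP_cons]
    simp
    ring

open Multiset in
lemma countP_lt_mono (i : ℕ) (M : Multiset ℕ) :
    countP (fun p => i+1 < p) M ≤ countP (fun p => i < p) M := by
  induction M using Multiset.induction with
  | empty => simp
  | cons a s ih =>
    rw [Multiset.countP_cons, Multiset.countP_cons]
    split_ifs <;> omega

lemma cast_natdist (m k : ℕ) : ((Nat.dist m k : ℕ) : ℤ) = |(m:ℤ) - (k:ℤ)| := by
  rcases abs_cases ((m:ℤ) - (k:ℤ)) with ⟨h1, h2⟩ | ⟨h1, h2⟩ <;>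
    rw [h1] <;> simp only [Nat.dist] <;> omega

open Multiset in
lemma count_countP (k : ℕ) (M : Multiset ℕ) :
    Multiset.count (k+1) M + countP (fun p => k+1 < p) M = countP (fun p => k < p) M := by
  induction M using Multiset.induction with
  | empty => simp
  | cons a s ih =>
    rw [Multiset.count_cons, Multiset.countP_cons, Multiset.countP_cons]
    split_ifs <;> omega

open Multiset in
lemma multiset_eq_of_countP (M N : Multiset ℕ) (hM : ∀ x ∈ M, 0 < x) (hN : ∀ x ∈ N, 0 < x)
    (h : ∀ i, countP (fun p => i < p) M = countP (fun p => i < p) N) : M = N := by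
  ext k
  cases k with
  | zero =>
    rw [Multiset.count_eq_zero.2 (fun hm => lt_irrefl 0 (hM 0 hm)),
        Multiset.count_eq_zero.2 (fun hm => lt_irrefl 0 (hN 0 hm))]
  | succ k =>
    have h1 := count_countP k M
    have h2 := count_countP k N
    have h3 := h k
    have h4 := h (k+1)
    omega

open Multiset in
lemma sum_countP (n : ℕ) (M : Multiset ℕ) (hM : ∀ p ∈ M, p ≤ n) :
    ∑ i ∈ Finset.range n, countP (fun p => i < p) M = M.sum := by
  induction M using Multiset.induction with
  | empty => simp
  | cons a s ih =>
    have ha : a ≤ n := hM a (Multiset.mem_cons_self a s)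
    have hs : ∀ p ∈ s, p ≤ n := fun p hp => hM p (Multiset.mem_cons_of_mem hp)
    simp only [Multiset.countP_cons, Finset.sum_add_distrib, ih hs, Multiset.sum_cons]
    have hfil : Finset.filter (fun i => i < a) (Finset.range n) = Finset.range a := by
      ext i; simp; omega
    have : ∑ i ∈ Finset.range n, (if i < a then (1:ℕ) else 0) = a := by
      rw [Finset.sum_ite, Finset.sum_const, Finset.sum_const_zero, add_zero, hfil]
      simp
    omega

lemma sum_one_singleton (t : Finset ℕ) (f : ℕ → ℤ) (hpos : ∀ i ∈ t, 1 ≤ f i)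
    (hsum : ∑ i ∈ t, f i = 1) : ∃ p, t = {p} ∧ f p = 1 := by
  have hcard := Finset.card_nsmul_le_sum t f 1 hpos
  rw [hsum, nsmul_eq_mul, mul_one] at hcard
  have h1 : t.card ≤ 1 := by exact_mod_cast hcard
  have h0 : t.card ≠ 0 := by
    intro h
    rw [Finset.card_eq_zero.1 h, Finset.sum_empty] at hsum
    exact absurd hsum (by norm_num)
  obtain ⟨p, hp⟩ := Finset.card_eq_one.1 (Nat.le_antisymm h1 (Nat.one_le_iff_ne_zero.2 h0))
  exact ⟨p, hp, by rw [hp, Finset.sum_singleton] at hsum; exact hsum⟩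

lemma int_extract (s : Finset ℕ) (h : ℕ → ℤ) (habs : ∑ i ∈ s, |h i| = 2)
    (hsum : ∑ i ∈ s, h i = 0) :
    ∃ p q, p ∈ s ∧ q ∈ s ∧ p ≠ q ∧ h p = 1 ∧ h q = -1 ∧
      ∀ i ∈ s, i ≠ p → i ≠ q → h i = 0 := by
  classical
  set pos := s.filter (fun i => 0 < h i) with hposdef
  set npos := s.filter (fun i => ¬ 0 < h i) with hnposdef
  set neg := s.filter (fun i => h i < 0) with hnegdef
  have key1 : ∑ i ∈ pos, h i + ∑ i ∈ npos, h i = 0 := by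
    rw [hposdef, hnposdef, Finset.sum_filter_add_sum_filter_not]; exact hsum
  have key2 : ∑ i ∈ pos, h i - ∑ i ∈ npos, h i = 2 := by
    have e1 : ∑ i ∈ pos, |h i| = ∑ i ∈ pos, h i :=
      Finset.sum_congr rfl (fun i hi => abs_of_pos (Finset.mem_filter.1 hi).2)
    have e2 : ∑ i ∈ npos, |h i| = -∑ i ∈ npos, h i := by
      rw [← Finset.sum_neg_distrib]
      exact Finset.sum_congr rfl (fun i hi => abs_of_nonpos (by
        have := (Finset.mem_filter.1 hi).2; omega))
    have := Finset.sum_filter_add_sum_filter_not s (fun i => 0 < h i) (fun i => |h i|)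
    rw [habs] at this
    rw [← hposdef, ← hnposdef, e1, e2] at this
    omega
  have hA : ∑ i ∈ pos, h i = 1 := by omega
  have hnegsum : ∑ i ∈ neg, h i = -1 := by
    have hsplit := Finset.sum_filter_add_sum_filter_not npos (fun i => h i < 0) h
    have hff : npos.filter (fun i => h i < 0) = neg := by
      rw [hnposdef, hnegdef, Finset.filter_filter]
      exact Finset.filter_congr (fun i _ => by constructor <;> intro <;> omega)
    have hzero : ∑ i ∈ npos.filter (fun i => ¬ h i < 0), h i = 0 := by
      apply Finset.sum_eq_zero
      intro i hi
      have h1 := (Finset.mem_filter.1 hi).2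
      have h2 := (Finset.mem_filter.1 (Finset.mem_filter.1 hi).1).2
      omega
    rw [hff, hzero, add_zero] at hsplit
    omega
  obtain ⟨p, hpset, hp1⟩ := sum_one_singleton pos h
    (fun i hi => (Finset.mem_filter.1 hi).2) hA
  obtain ⟨q, hqset, hq1⟩ := sum_one_singleton neg (fun i => -h i)
    (fun i hi => by have := (Finset.mem_filter.1 hi).2; show (1:ℤ) ≤ -h i; omega)
    (by rw [Finset.sum_neg_distrib, hnegsum]; ring)
  have hp1' : h p = 1 := hp1
  have hq1' : h q = -1 := by
    have : -h q = 1 := hq1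
    omega
  have hpmem : p ∈ s := by
    have : p ∈ pos := by rw [hpset]; exact Finset.mem_singleton_self p
    exact (Finset.mem_filter.1 this).1
  have hqmem : q ∈ s := by
    have : q ∈ neg := by rw [hqset]; exact Finset.mem_singleton_self q
    exact (Finset.mem_filter.1 this).1
  refine ⟨p, q, hpmem, hqmem, ?_, hp1', hq1', ?_⟩
  · intro hpq; rw [hpq] at hp1'; omega
  · intro i hi hip hiq
    by_contra hne
    rcases lt_or_gt_of_ne hne with hlt | hgt
    · have : i ∈ neg := Finset.mem_filter.2 ⟨hi, hlt⟩
      rw [hqset, Finset.mem_singleton] at this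
      exact hiq this
    · have : i ∈ pos := Finset.mem_filter.2 ⟨hi, hgt⟩
      rw [hpset, Finset.mem_singleton] at this
      exact hip this

open Multiset in
lemma stmt0_forward {n : ℕ} (lam mu : Nat.Partition n) (hne : mu ≠ lam)
    (ht : Transfer lam mu) : l1 (conjFn lam) (conjFn mu) = 2 := by
  obtain ⟨a, b, ha, hb, hQ⟩ := ht
  have ha1 : 1 ≤ a := lam.parts_pos ha
  have hf : ∀ i, conjFn lam i = (if i < a then 1 else 0) + (if i < b then 1 else 0)
      + countP (fun p => i < p) ((lam.parts.erase a).erase b) :=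
    fun i => countP_decomp i lam.parts (fun x hx => lam.parts_pos hx) ha hb
  have hg : ∀ i, conjFn mu i = (if i < a - 1 then 1 else 0) + (if i < b + 1 then 1 else 0)
      + countP (fun p => i < p) ((lam.parts.erase a).erase b) := by
    intro i
    show countP (fun p => i < p) mu.parts = _
    rw [hQ, countP_lt_filter, Multiset.countP_cons, Multiset.countP_cons]
    ring
  have hab : a - 1 ≠ b := by
    intro he
    apply hne
    apply Nat.Partition.ext
    apply multiset_eq_of_countP _ _ (fun x hx => mu.parts_pos hx) (fun x hx => lam.parts_pos hx)
    intro i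
    have e1 : countP (fun p => i < p) mu.parts = conjFn mu i := rfl
    have e2 : countP (fun p => i < p) lam.parts = conjFn lam i := rfl
    rw [e1, e2, hf i, hg i]
    have hfi := hf i
    split_ifs <;> omega
  have hdist : ∀ i, Nat.dist (conjFn lam i) (conjFn mu i)
      = (if i = a - 1 then 1 else 0) + (if i = b then 1 else 0) := by
    intro i
    rw [hf, hg, Nat.dist_add_add_right]
    simp only [Nat.dist]
    split_ifs <;> omega
  show ∑' i, Nat.dist (conjFn lam i) (conjFn mu i) = 2
  rw [tsum_eq_sum (s := {a - 1, b}) (fun i hi => by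
    rw [hdist]
    simp only [Finset.mem_insert, Finset.mem_singleton, not_or] at hi
    simp [hi.1, hi.2])]
  rw [Finset.sum_pair hab, hdist, hdist]
  simp [hab, Ne.symm hab]

open Multiset in
lemma stmt0_converse {n : ℕ} (lam mu : Nat.Partition n)
    (h2 : l1 (conjFn lam) (conjFn mu) = 2) : Transfer lam mu := by
  have hle : ∀ p ∈ lam.parts, p ≤ n := fun p hp => by
    have := Multiset.single_le_sum (fun x _ => Nat.zero_le x) p hp
    rw [lam.parts_sum] at this; exact this
  have hle' : ∀ p ∈ mu.parts, p ≤ n := fun p hp => by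
    have := Multiset.single_le_sum (fun x _ => Nat.zero_le x) p hp
    rw [mu.parts_sum] at this; exact this
  have hf0 : ∀ i, n ≤ i → conjFn lam i = 0 := fun i hi =>
    Multiset.countP_eq_zero.2 (fun p hp => by have := hle p hp; omega)
  have hg0 : ∀ i, n ≤ i → conjFn mu i = 0 := fun i hi =>
    Multiset.countP_eq_zero.2 (fun p hp => by have := hle' p hp; omega)
  have hsum2 : ∑ i ∈ Finset.range n, Nat.dist (conjFn lam i) (conjFn mu i) = 2 := by
    rw [← h2]
    exact (tsum_eq_sum (fun i hi => by
      rw [hf0 i (by simpa using hi), hg0 i (by simpa using hi)]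
      simp [Nat.dist])).symm
  have hfs : ∑ i ∈ Finset.range n, conjFn lam i = n := by
    have := sum_countP n lam.parts hle
    rw [lam.parts_sum] at this
    exact this
  have hgs : ∑ i ∈ Finset.range n, conjFn mu i = n := by
    have := sum_countP n mu.parts hle'
    rw [mu.parts_sum] at this
    exact this
  obtain ⟨p, q, hpmem, hqmem, hpq, hhp, hhq, hzero⟩ :=
    int_extract (Finset.range n) (fun i => (conjFn lam i : ℤ) - conjFn mu i)
      (by
        have e : ∀ i ∈ Finset.range n, |((conjFn lam i : ℤ) - conjFn mu i)|
            = ((Nat.dist (conjFn lam i) (conjFn mu i) : ℕ) : ℤ) :=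
          fun i _ => (cast_natdist _ _).symm
        rw [Finset.sum_congr rfl e, ← Nat.cast_sum, hsum2]
        norm_num)
      (by
        rw [Finset.sum_sub_distrib, ← Nat.cast_sum, ← Nat.cast_sum, hfs, hgs, sub_self])
  have hp' : (conjFn lam p : ℤ) - conjFn mu p = 1 := hhp
  have hq' : (conjFn lam q : ℤ) - conjFn mu q = -1 := hhq
  have hfp : conjFn lam p = conjFn mu p + 1 := by omega
  have hgq : conjFn mu q = conjFn lam q + 1 := by omega
  have hz : ∀ i, i ≠ p → i ≠ q → conjFn lam i = conjFn mu i := by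
    intro i hip hiq
    by_cases hin : i < n
    · have := hzero i (Finset.mem_range.2 hin) hip hiq
      have h' : (conjFn lam i : ℤ) - conjFn mu i = 0 := this
      omega
    · rw [hf0 i (by omega), hg0 i (by omega)]
  have hmg : ∀ i, conjFn mu (i+1) ≤ conjFn mu i := fun i => countP_lt_mono i mu.parts
  have hmf : ∀ i, conjFn lam (i+1) ≤ conjFn lam i := fun i => countP_lt_mono i lam.parts
  -- a := p + 1 is a part of lam
  have hgp1 : conjFn lam (p+1) ≤ conjFn mu (p+1) := by
    by_cases hc : p + 1 = q
    · rw [hc]; omega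
    · rw [hz (p+1) (by omega) hc]
  have hamem : p + 1 ∈ lam.parts := by
    rw [← Multiset.count_pos]
    have hcc : Multiset.count (p+1) lam.parts + conjFn lam (p+1) = conjFn lam p :=
      count_countP p lam.parts
    have := hmg p
    omega
  -- b := q
  have hbmem : q ∈ lam.parts.erase (p+1) ∨ q = 0 := by
    by_cases hq0 : q = 0
    · exact Or.inr hq0
    · left
      obtain ⟨q', rfl⟩ : ∃ q', q = q' + 1 := ⟨q - 1, by omega⟩
      have hcc : Multiset.count (q'+1) lam.parts + conjFn lam (q'+1) = conjFn lam q' :=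
        count_countP q' lam.parts
      rw [← Multiset.count_pos]
      by_cases hc : q' + 1 = p + 1
      · -- q = p + 1, need two copies
        have hq'p : q' = p := by omega
        subst hq'p
        rw [Multiset.count_erase_self]
        have := hmg q'
        omega
      · rw [Multiset.count_erase_of_ne (by omega)]
        have hfq' : conjFn mu q' ≤ conjFn lam q' := by
          by_cases hc2 : q' = p
          · subst hc2; omega
          · rw [hz q' hc2 (by omega)]
        have := hmg q'
        omega
  refine ⟨p + 1, q, hamem, hbmem, ?_⟩
  apply multiset_eq_of_countP _ _ (fun x hx => mu.parts_pos hx)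
    (fun x hx => (Multiset.mem_filter.1 hx).2)
  intro i
  rw [countP_lt_filter, Multiset.countP_cons, Multiset.countP_cons]
  have hfd : conjFn lam i = (if i < p + 1 then 1 else 0) + (if i < q then 1 else 0)
      + countP (fun x => i < x) ((lam.parts.erase (p+1)).erase q) :=
    countP_decomp i lam.parts (fun x hx => lam.parts_pos hx) hamem hbmem
  have hkey : conjFn mu i + (if i = p then 1 else 0)
      = conjFn lam i + (if i = q then 1 else 0) := by
    by_cases h1 : i = p
    · by_cases h2 : i = q
      · exact absurd (h1.symm.trans h2) hpq
      · rw [if_pos h1, if_neg h2, h1]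
        omega
    · by_cases h2 : i = q
      · rw [if_neg h1, if_pos h2, h2]
        omega
      · rw [if_neg h1, if_neg h2, hz i h1 h2]
  have egoal : countP (fun x => i < x) mu.parts = conjFn mu i := rfl
  rw [egoal]
  simp only [Nat.add_sub_cancel]
  split_ifs at hfd hkey ⊢ <;> omega

/-- For partitions `λ, μ` of `n`, the L¹ distance between their conjugates
equals `2` iff `μ` is obtained from `λ` by decreasing one part by 1 and increasing
another part (possibly a new part of size 0) by 1, followed by reordering
(equivalently: they are distinct and related by an elementary unit transfer). -/
theorem stmt0 (n : ℕ) (lam mu : Nat.Partition n) :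
    l1 (conjFn lam) (conjFn mu) = 2 ↔ (mu ≠ lam ∧ Transfer lam mu) := by
  constructor
  · intro h2
    have hne : mu ≠ lam := by
      intro he
      rw [he] at h2
      simp [l1, Nat.dist_self] at h2
    exact ⟨hne, stmt0_converse lam mu h2⟩
  · rintro ⟨hne, ht⟩
    exact stmt0_forward lam mu hne ht
end

section
/- For two weakly decreasing finite sequences of nonnegative integers a and b with equal sums, if Σ_i |a_i − b_i| = 2 (after padding with zeros), then b is obtained from a by decreasing exactly one coordinate by 1 and increasing exactly one other coordinate by 1. -/
lemma sum_one_aux {s : Finset ℕ} {g : ℕ → ℕ} (h : ∑ i ∈ s, g i = 1) :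
    ∃ i ∈ s, g i = 1 ∧ ∀ j ∈ s, j ≠ i → g j = 0 := by
  classical
  induction s using Finset.induction_on with
  | empty => simp at h
  | @insert x t hx ih =>
    rw [Finset.sum_insert hx] at h
    rcases Nat.add_eq_one_iff.mp h with ⟨h1, h2⟩ | ⟨h1, h2⟩
    · obtain ⟨i, hi, hgi, hrest⟩ := ih h2
      refine ⟨i, Finset.mem_insert_of_mem hi, hgi, ?_⟩
      intro j hj hji
      rcases Finset.mem_insert.mp hj with rfl | hj
      · exact h1
      · exact hrest j hj hji
    · refine ⟨x, Finset.mem_insert_self x t, h1, ?_⟩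
      intro j hj hjx
      rcases Finset.mem_insert.mp hj with rfl | hj
      · exact absurd rfl hjx
      · exact Finset.sum_eq_zero_iff.mp h2 j hj

/-- for weakly decreasing eventually-zero sequences of naturals with equal
sums, L¹ distance `2` forces `b` to arise from `a` by decreasing exactly one coordinate
by `1` and increasing exactly one other coordinate by `1`. -/
theorem stmt1 (a b : ℕ → ℕ) (ha : Antitone a) (hb : Antitone b)
    (ha0 : ∀ᶠ i in Filter.atTop, a i = 0) (hb0 : ∀ᶠ i in Filter.atTop, b i = 0)
    (hsum : ∑' i, a i = ∑' i, b i)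
    (h : (∑' i, Nat.dist (a i) (b i)) = 2) :
    ∃ i j : ℕ, i ≠ j ∧ b i + 1 = a i ∧ b j = a j + 1 ∧
      ∀ m : ℕ, m ≠ i → m ≠ j → b m = a m := by
  classical
  obtain ⟨N1, hN1⟩ := Filter.eventually_atTop.mp ha0
  obtain ⟨N2, hN2⟩ := Filter.eventually_atTop.mp hb0
  set N := max N1 N2 with hN
  have hA : ∀ i, N ≤ i → a i = 0 := fun i hi => hN1 i (le_trans (le_max_left _ _) hi)
  have hB : ∀ i, N ≤ i → b i = 0 := fun i hi => hN2 i (le_trans (le_max_right _ _) hi)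
  have key : ∀ f : ℕ → ℕ, (∀ i, N ≤ i → f i = 0) →
      ∑' i, f i = ∑ i ∈ Finset.range N, f i := by
    intro f hf
    exact tsum_eq_sum (fun i hi => hf i (by simpa using hi))
  rw [key a hA, key b hB] at hsum
  rw [key _ (fun i hi => by simp [Nat.dist, hA i hi, hB i hi])] at h
  set p : ℕ → ℕ := fun i => a i - b i with hp
  set q : ℕ → ℕ := fun i => b i - a i with hq
  have hd : ∑ i ∈ Finset.range N, p i + ∑ i ∈ Finset.range N, q i = 2 := by
    rw [← Finset.sum_add_distrib]
    simpa [Nat.dist, hp, hq] using h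
  have hpq : ∑ i ∈ Finset.range N, p i = ∑ i ∈ Finset.range N, q i := by
    have h1 : ∑ i ∈ Finset.range N, (a i + q i) = ∑ i ∈ Finset.range N, (b i + p i) := by
      refine Finset.sum_congr rfl fun i _ => ?_
      simp only [hp, hq]
      omega
    rw [Finset.sum_add_distrib, Finset.sum_add_distrib, hsum] at h1
    omega
  have hp1 : ∑ i ∈ Finset.range N, p i = 1 := by omega
  have hq1 : ∑ i ∈ Finset.range N, q i = 1 := by omega
  obtain ⟨i, hi, hpi, hprest⟩ := sum_one_aux hp1
  obtain ⟨j, hj, hqj, hqrest⟩ := sum_one_aux hq1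
  have hai : b i + 1 = a i := by simp only [hp] at hpi; omega
  have haj : b j = a j + 1 := by simp only [hq] at hqj; omega
  have hij : i ≠ j := by intro hh; rw [hh] at hai; omega
  refine ⟨i, j, hij, hai, haj, ?_⟩
  intro m hmi hmj
  by_cases hm : m ∈ Finset.range N
  · have h1 := hprest m hm hmi
    have h2 := hqrest m hm hmj
    simp only [hp] at h1
    simp only [hq] at h2
    omega
  · have hm' : N ≤ m := by simpa using hm
    rw [hA m hm', hB m hm']
end

section
/- Conjugation λ ↦ λ' is a graph automorphism of the partition graph G_n: partitions λ and μ of n are adjacent in G_n if and only if their conjugates λ' and μ' are adjacent in G_n. -/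
section Aux

open Multiset

/-- Splitting `countP (k < ·)` into the count of `k+1` and `countP (k+1 < ·)`. -/
lemma my_countP_lt_split (k : ℕ) (s : Multiset ℕ) :
    countP (fun p => k < p) s = s.count (k + 1) + countP (fun p => k + 1 < p) s := by
  induction s using Multiset.induction_on with
  | empty => simp
  | cons a s ih =>
    rw [countP_cons, countP_cons, count_cons]
    split_ifs <;> omega

/-- A partition is determined by its conjugate function. -/
lemma my_parts_eq_of_conjFn_eq {n : ℕ} {P Q : Nat.Partition n}
    (h : ∀ i, conjFn P i = conjFn Q i) : P = Q := by
  apply Nat.Partition.ext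
  rw [Multiset.ext]
  intro k
  rcases k with _ | k
  · rw [Multiset.count_eq_zero_of_notMem, Multiset.count_eq_zero_of_notMem]
    · intro hm; exact absurd (Q.parts_pos hm) (lt_irrefl 0)
    · intro hm; exact absurd (P.parts_pos hm) (lt_irrefl 0)
  · have h1 := my_countP_lt_split k P.parts
    have h2 := my_countP_lt_split k Q.parts
    have e1 := h k
    have e2 := h (k + 1)
    simp only [conjFn] at e1 e2
    omega

lemma my_part_le {n : ℕ} (P : Nat.Partition n) {p : ℕ} (hp : p ∈ P.parts) : p ≤ n := by
  have := Multiset.single_le_sum (fun x _ => Nat.zero_le x) p hp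
  rwa [P.parts_sum] at this

lemma my_card_le_sum (s : Multiset ℕ) (h : ∀ x ∈ s, 0 < x) : Multiset.card s ≤ s.sum := by
  induction s using Multiset.induction_on with
  | empty => simp
  | cons a s ih =>
    rw [Multiset.card_cons, Multiset.sum_cons]
    have ha := h a (Multiset.mem_cons_self a s)
    have := ih fun x hx => h x (Multiset.mem_cons_of_mem hx)
    omega

lemma my_conjFn_le {n : ℕ} (P : Nat.Partition n) (i : ℕ) : conjFn P i ≤ n := by
  calc conjFn P i ≤ Multiset.card P.parts := Multiset.countP_le_card _ _
    _ ≤ P.parts.sum := my_card_le_sum _ fun x hx => P.parts_pos hx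
    _ = n := P.parts_sum

lemma my_conjFn_anti {n : ℕ} (P : Nat.Partition n) {i j : ℕ} (h : i ≤ j) :
    conjFn P j ≤ conjFn P i := by
  simp only [conjFn]
  induction P.parts using Multiset.induction_on with
  | empty => simp
  | cons a s ih =>
    rw [countP_cons, countP_cons]
    split_ifs <;> omega

lemma my_conjFn_eq_zero {n : ℕ} (P : Nat.Partition n) {i : ℕ} (h : n ≤ i) : conjFn P i = 0 := by
  rw [conjFn, Multiset.countP_eq_zero]
  intro p hp
  have := my_part_le P hp
  omega

lemma my_conjFn_conj {n : ℕ} {P Q : Nat.Partition n} (h : IsConjugate P Q) (j : ℕ) :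
    conjFn Q j = Multiset.card ((Multiset.range n).filter (fun i => j < conjFn P i)) := by
  rw [conjFn, h]
  unfold conjParts
  rw [countP_filter]
  simp only [show ∀ x : ℕ, ((j < x) ∧ 0 < x) ↔ j < x from fun x => by omega]
  rw [countP_map]

lemma my_lt_conjFn_conj {n : ℕ} {P Q : Nat.Partition n} (h : IsConjugate P Q) (i j : ℕ) :
    i < conjFn Q j ↔ i < n ∧ j < conjFn P i := by
  rw [my_conjFn_conj h]
  constructor
  · intro hi
    have hcard : Multiset.card ((Multiset.range n).filter (fun i => j < conjFn P i)) ≤ n := by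
      calc Multiset.card ((Multiset.range n).filter (fun i => j < conjFn P i))
          ≤ Multiset.card (Multiset.range n) := Multiset.card_le_card (Multiset.filter_le _ _)
        _ = n := Multiset.card_range n
    have hin : i < n := lt_of_lt_of_le hi hcard
    refine ⟨hin, ?_⟩
    by_contra hj
    push_neg at hj
    have hsub : (Multiset.range n).filter (fun x => j < conjFn P x) ≤ Multiset.range i := by
      rw [Multiset.le_iff_subset (Multiset.Nodup.filter _ (Multiset.nodup_range n))]
      intro x hx
      rw [Multiset.mem_filter, Multiset.mem_range] at hx
      rw [Multiset.mem_range]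
      by_contra hxi
      push_neg at hxi
      have := my_conjFn_anti P hxi
      omega
    have := Multiset.card_le_card hsub
    rw [Multiset.card_range] at this
    omega
  · rintro ⟨hin, hj⟩
    have hsub : Multiset.range (i + 1) ≤ (Multiset.range n).filter (fun x => j < conjFn P x) := by
      rw [Multiset.le_iff_subset (Multiset.nodup_range _)]
      intro x hx
      rw [Multiset.mem_range] at hx
      rw [Multiset.mem_filter, Multiset.mem_range]
      have hxi : x ≤ i := by omega
      exact ⟨by omega, lt_of_lt_of_le hj (my_conjFn_anti P hxi)⟩
    have := Multiset.card_le_card hsub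
    rw [Multiset.card_range] at this
    omega

lemma my_sum_filter_pos (s : Multiset ℕ) : (s.filter (fun x => 0 < x)).sum = s.sum := by
  induction s using Multiset.induction_on with
  | empty => simp
  | cons a s ih =>
    rw [filter_cons]
    by_cases ha : 0 < a
    · rw [if_pos ha, Multiset.singleton_add, Multiset.sum_cons, Multiset.sum_cons, ih]
    · rw [if_neg ha, Multiset.sum_cons, zero_add, ih]
      omega

lemma my_sum_countP (n : ℕ) (s : Multiset ℕ) (hs : ∀ p ∈ s, p ≤ n) :
    ∑ j ∈ Finset.range n, countP (fun p => j < p) s = s.sum := by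
  induction s using Multiset.induction_on with
  | empty => simp
  | cons a s ih =>
    simp only [countP_cons, Multiset.sum_cons]
    rw [Finset.sum_add_distrib, ih fun p hp => hs p (Multiset.mem_cons_of_mem hp)]
    have ha : a ≤ n := hs a (Multiset.mem_cons_self a s)
    have : ∑ j ∈ Finset.range n, (if j < a then 1 else 0) = a := by
      rw [← Finset.card_filter]
      have : Finset.filter (fun j => j < a) (Finset.range n) = Finset.range a := by
        ext x
        simp only [Finset.mem_filter, Finset.mem_range]
        omega
      rw [this, Finset.card_range]
    omega

/-- The conjugate partition, as a `Nat.Partition n`. -/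
def myConjPartition {n : ℕ} (P : Nat.Partition n) : Nat.Partition n where
  parts := conjParts P
  parts_pos := fun h => (Multiset.mem_filter.mp h).2
  parts_sum := by
    unfold conjParts
    rw [my_sum_filter_pos]
    have hmap : ((Multiset.range n).map (conjFn P)).sum
        = ∑ j ∈ Finset.range n, conjFn P j := rfl
    rw [hmap]
    have : ∑ j ∈ Finset.range n, conjFn P j
        = ∑ j ∈ Finset.range n, countP (fun p => j < p) P.parts := rfl
    rw [this, my_sum_countP n P.parts fun p hp => my_part_le P hp, P.parts_sum]

lemma my_isConjugate_conj {n : ℕ} (P : Nat.Partition n) : IsConjugate P (myConjPartition P) := rfl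

lemma my_nat_eq_of_lt_iff {x y : ℕ} (h : ∀ k, k < x ↔ k < y) : x = y := by
  rcases lt_trichotomy x y with h1 | h1 | h1
  · have := (h x).mpr h1; omega
  · exact h1
  · have := (h y).mp h1; omega

lemma my_conjFn_double {n : ℕ} (P : Nat.Partition n) (i : ℕ) :
    conjFn (myConjPartition (myConjPartition P)) i = conjFn P i := by
  apply my_nat_eq_of_lt_iff
  intro k
  rw [my_lt_conjFn_conj (my_isConjugate_conj (myConjPartition P)),
    my_lt_conjFn_conj (my_isConjugate_conj P)]
  constructor
  · rintro ⟨_, _, hk⟩; exact hk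
  · intro hk
    have h1 : conjFn P i ≤ n := my_conjFn_le P i
    have h2 : i < n := by
      by_contra hin
      push_neg at hin
      rw [my_conjFn_eq_zero P hin] at hk
      omega
    exact ⟨by omega, h2, hk⟩

lemma my_eq_double {n : ℕ} (P : Nat.Partition n) : P = myConjPartition (myConjPartition P) :=
  my_parts_eq_of_conjFn_eq fun i => (my_conjFn_double P i).symm

lemma my_isConjugate_symm {n : ℕ} {P Q : Nat.Partition n} (h : IsConjugate P Q) :
    IsConjugate Q P := by
  have hq : Q = myConjPartition P := Nat.Partition.ext h
  subst hq
  show P.parts = conjParts (myConjPartition P)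
  conv_lhs => rw [my_eq_double P]
  rfl

/-- Main lemma: a nontrivial transfer between `P` and `Q` induces a transfer between
their conjugates. -/
lemma my_transfer_conj {n : ℕ} {P Q P' Q' : Nat.Partition n} (hPQ : Transfer P Q)
    (hne : P ≠ Q) (h1 : IsConjugate P P') (h2 : IsConjugate Q Q') : Transfer P' Q' := by
  obtain ⟨a, b, ha, hb, hQ⟩ := hPQ
  set M0 : Multiset ℕ := (P.parts.erase a).erase b with hM0
  have ha1 : 1 ≤ a := P.parts_pos ha
  have han : a ≤ n := my_part_le P ha
  have hn1 : 1 ≤ n := le_trans ha1 han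
  -- the conjugate function of P
  have hfP : ∀ i, conjFn P i
      = ((if i < a then 1 else 0) + (if i < b then 1 else 0)) + countP (fun p => i < p) M0 := by
    intro i
    rcases hb with hb | rfl
    · have e1 : P.parts = a ::ₘ b ::ₘ M0 := by
        rw [hM0, Multiset.cons_erase hb, Multiset.cons_erase ha]
      rw [conjFn]
      rw [e1, countP_cons, countP_cons]
      split_ifs <;> omega
    · have h0 : (0 : ℕ) ∉ P.parts.erase a := fun h =>
        absurd (P.parts_pos (Multiset.mem_of_mem_erase h)) (lt_irrefl 0)
      have e0 : M0 = P.parts.erase a := by rw [hM0, Multiset.erase_of_notMem h0]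
      have e1 : P.parts = a ::ₘ M0 := by rw [e0, Multiset.cons_erase ha]
      rw [conjFn]
      rw [e1, countP_cons]
      split_ifs <;> omega
  -- the conjugate function of Q
  have hfQ : ∀ i, conjFn Q i
      = ((if i < a - 1 then 1 else 0) + (if i < b + 1 then 1 else 0))
        + countP (fun p => i < p) M0 := by
    intro i
    rw [conjFn]
    rw [hQ, countP_filter]
    simp only [show ∀ x : ℕ, ((i < x) ∧ 0 < x) ↔ i < x from fun x => by omega]
    rw [countP_cons, countP_cons]
    split_ifs <;> omega
  have hbne : b ≠ a - 1 := by
    intro h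
    apply hne
    apply my_parts_eq_of_conjFn_eq
    intro i
    rw [hfP i, hfQ i, h]
    split_ifs <;> omega
  set c : ℕ := conjFn P (a - 1) with hc
  set d : ℕ := conjFn P b with hd
  have hc_pos : 0 < c := Multiset.countP_pos.mpr ⟨a, ha, by omega⟩
  have hbn : b < n := by
    rcases hb with hb | rfl
    · have e1 : P.parts = a ::ₘ b ::ₘ M0 := by
        rw [hM0, Multiset.cons_erase hb, Multiset.cons_erase ha]
      have hsum := P.parts_sum
      rw [e1, Multiset.sum_cons, Multiset.sum_cons] at hsum
      omega
    · omega
  -- values of conjFn Q in terms of c and d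
  have hQa : conjFn Q (a - 1) = c - 1 := by
    rw [hfQ, hc, hfP]
    split_ifs <;> omega
  have hQb : conjFn Q b = d + 1 := by
    rw [hfQ, hd, hfP]
    split_ifs <;> omega
  have hag : ∀ i, i ≠ a - 1 → i ≠ b → conjFn Q i = conjFn P i := by
    intro i hi1 hi2
    rw [hfQ, hfP]
    split_ifs <;> omega
  -- decompose the range
  set R : Multiset ℕ := ((Multiset.range n).erase (a - 1)).erase b with hR
  have hmem1 : a - 1 ∈ Multiset.range n := Multiset.mem_range.mpr (by omega)
  have hmem2 : b ∈ (Multiset.range n).erase (a - 1) :=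
    (Multiset.Nodup.mem_erase_iff (Multiset.nodup_range n)).mpr ⟨hbne, Multiset.mem_range.mpr hbn⟩
  have hrange : Multiset.range n = (a - 1) ::ₘ b ::ₘ R := by
    rw [hR, Multiset.cons_erase hmem2, Multiset.cons_erase hmem1]
  have hRmem : ∀ i ∈ R, i ≠ a - 1 ∧ i ≠ b := by
    intro i hi
    rw [hR] at hi
    have h2 := (Multiset.Nodup.mem_erase_iff
      (Multiset.Nodup.erase _ (Multiset.nodup_range n))).mp hi
    have h3 := (Multiset.Nodup.mem_erase_iff (Multiset.nodup_range n)).mp h2.2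
    exact ⟨h3.1, h2.1⟩
  have hmapQ : Multiset.map (conjFn Q) (Multiset.range n)
      = (c - 1) ::ₘ (d + 1) ::ₘ Multiset.map (conjFn P) R := by
    rw [hrange, Multiset.map_cons, Multiset.map_cons, hQa, hQb]
    congr 1
    congr 1
    exact Multiset.map_congr rfl fun i hi => hag i (hRmem i hi).1 (hRmem i hi).2
  have hmapP : Multiset.map (conjFn P) (Multiset.range n)
      = c ::ₘ d ::ₘ Multiset.map (conjFn P) R := by
    rw [hrange, Multiset.map_cons, Multiset.map_cons, hc, hd]
  have hP'e : P'.parts.erase c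
      = Multiset.filter (fun x => 0 < x) (d ::ₘ Multiset.map (conjFn P) R) := by
    rw [h1]
    unfold conjParts
    rw [hmapP, filter_cons, if_pos hc_pos, Multiset.singleton_add, Multiset.erase_cons_head]
  have hP'ed : (P'.parts.erase c).erase d
      = Multiset.filter (fun x => 0 < x) (Multiset.map (conjFn P) R) := by
    rw [hP'e, filter_cons]
    by_cases hdp : 0 < d
    · rw [if_pos hdp, Multiset.singleton_add, Multiset.erase_cons_head]
    · rw [if_neg hdp, zero_add, Multiset.erase_of_notMem]
      intro hmem
      exact hdp (Multiset.mem_filter.mp hmem).2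
  refine ⟨c, d, ?_, ?_, ?_⟩
  · rw [h1]
    exact Multiset.mem_filter.mpr ⟨by rw [hmapP]; exact Multiset.mem_cons_self _ _, hc_pos⟩
  · by_cases hdp : 0 < d
    · left
      rw [hP'e]
      exact Multiset.mem_filter.mpr ⟨Multiset.mem_cons_self _ _, hdp⟩
    · right; omega
  · rw [h2]
    unfold conjParts
    rw [hmapQ, hP'ed, filter_cons, filter_cons, filter_cons, filter_cons,
      Multiset.filter_filter]
    congr 2
    · simp

end Aux

/-- conjugation is a graph automorphism of the partition graph `G n`. -/
theorem stmt2 (n : ℕ) (lam mu lam' mu' : Nat.Partition n)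
    (h1 : IsConjugate lam lam') (h2 : IsConjugate mu mu') :
    (G n).Adj lam mu ↔ (G n).Adj lam' mu' := by
  have hs1 := my_isConjugate_symm h1
  have hs2 := my_isConjugate_symm h2
  rw [G, SimpleGraph.fromRel_adj, SimpleGraph.fromRel_adj]
  constructor
  · rintro ⟨hne, hT⟩
    refine ⟨?_, ?_⟩
    · intro he
      apply hne
      rw [he] at hs1
      exact Nat.Partition.ext (hs1.trans hs2.symm)
    · rcases hT with hT | hT
      · exact Or.inl (my_transfer_conj hT hne h1 h2)
      · exact Or.inr (my_transfer_conj hT (Ne.symm hne) h2 h1)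
  · rintro ⟨hne, hT⟩
    refine ⟨?_, ?_⟩
    · intro he
      apply hne
      rw [he] at h1
      exact Nat.Partition.ext (h1.trans h2.symm)
    · rcases hT with hT | hT
      · exact Or.inl (my_transfer_conj hT hne hs1 hs2)
      · exact Or.inr (my_transfer_conj hT (Ne.symm hne) hs2 hs1)
end

section
/- Partitions λ and μ of n are adjacent in the partition graph G_n if and only if, after padding with trailing zeros, Σ_i |λ'_i − μ'_i| = 2, where λ' and μ' are the conjugate partitions. -/
/-!
Moving a unit from a part `a` to a part `b` deletes the last cell of a row of length `a` and
appends a cell to a row of length `b`, so the conjugate loses `1` at index `a - 1` and gains `1`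
at index `b`: the conjugates are at distance `2` unless the move does nothing. Conversely,
both conjugates sum to `n`, so at distance `2` they differ by `-1` at one index `i` and `+1`
at another index `j`. Since the multiplicity of the part `k + 1` is `λ'_k - λ'_(k+1)`, `i + 1`
is a part of `λ` and `j` is another part (or `0`); moving a unit from `i + 1` to `j` gives a
partition with the conjugate of `μ`, hence `μ` itself.
-/

namespace Multiset

lemma countP_lt_eq_countP_succ_lt_add_count (s : Multiset ℕ) (k : ℕ) :
    s.countP (k < ·) = s.countP (k + 1 < ·) + s.count (k + 1) := by
  induction s using Multiset.induction with
  | empty => simp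
  | cons a s ih =>
    simp only [countP_cons, count_cons, ih]
    split_ifs <;> omega

lemma eq_of_countP_lt_eq {s t : Multiset ℕ} (hs : ∀ x ∈ s, 0 < x) (ht : ∀ x ∈ t, 0 < x)
    (h : ∀ k, s.countP (k < ·) = t.countP (k < ·)) : s = t := by
  ext (_ | k)
  · rw [count_eq_zero_of_notMem fun h0 => (hs 0 h0).false,
      count_eq_zero_of_notMem fun h0 => (ht 0 h0).false]
  · have hs' := s.countP_lt_eq_countP_succ_lt_add_count k
    have ht' := t.countP_lt_eq_countP_succ_lt_add_count k
    rw [h k, h (k + 1)] at hs'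
    omega

lemma sum_range_countP_lt {s : Multiset ℕ} {N : ℕ} (h : ∀ p ∈ s, p ≤ N) :
    ∑ k ∈ Finset.range N, s.countP (k < ·) = s.sum := by
  induction s using Multiset.induction with
  | empty => simp
  | cons a s ih =>
    have ha : a ≤ N := h a (mem_cons_self a s)
    have hrange : {k ∈ Finset.range N | k < a} = Finset.range a := by
      ext k; simp only [Finset.mem_filter, Finset.mem_range]; omega
    simp only [countP_cons, sum_cons, Finset.sum_add_distrib, Finset.sum_boole, hrange,
      Finset.card_range, ih fun p hp => h p (mem_cons_of_mem hp)]
    simp [add_comm]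

lemma countP_lt_filter_pos (s : Multiset ℕ) (k : ℕ) :
    (s.filter (0 < ·)).countP (k < ·) = s.countP (k < ·) :=
  (countP_filter _ _ _).trans (countP_congr rfl fun p _ => by simp only [eq_iff_iff]; omega)

end Multiset

lemma Finset.exists_eq_ite_of_sum_eq_one {ι : Type*} [DecidableEq ι] {s : Finset ι} {u : ι → ℕ}
    (h : ∑ k ∈ s, u k = 1) : ∃ i ∈ s, ∀ k ∈ s, u k = if k = i then 1 else 0 := by
  obtain ⟨i, hi, hui⟩ := Finset.exists_ne_zero_of_sum_ne_zero (h ▸ one_ne_zero)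
  have hsplit := Finset.add_sum_erase s u hi
  have hrest : ∑ k ∈ s.erase i, u k = 0 := by omega
  refine ⟨i, hi, fun k hk => ?_⟩
  split_ifs with hki
  · subst hki; omega
  · exact Finset.sum_eq_zero_iff.mp hrest k (Finset.mem_erase.mpr ⟨hki, hk⟩)

lemma exists_unit_move_of_sum_dist_eq_two {ι : Type*} [DecidableEq ι] {s : Finset ι}
    {f g : ι → ℕ} (hsum : ∑ k ∈ s, f k = ∑ k ∈ s, g k)
    (hdist : ∑ k ∈ s, Nat.dist (f k) (g k) = 2) :
    ∃ i ∈ s, ∃ j ∈ s, i ≠ j ∧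
      ∀ k ∈ s, g k + (if k = i then 1 else 0) = f k + (if k = j then 1 else 0) := by
  have hexcess : ∑ k ∈ s, f k + ∑ k ∈ s, (g k - f k) = ∑ k ∈ s, g k + ∑ k ∈ s, (f k - g k) := by
    simp only [← Finset.sum_add_distrib]
    exact Finset.sum_congr rfl fun k _ => by omega
  have hparts : ∑ k ∈ s, (f k - g k) + ∑ k ∈ s, (g k - f k) = 2 := by
    rw [← Finset.sum_add_distrib]; exact hdist
  obtain ⟨i, hi, hfg⟩ :=
    Finset.exists_eq_ite_of_sum_eq_one (show ∑ k ∈ s, (f k - g k) = 1 by omega)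
  obtain ⟨j, hj, hgf⟩ :=
    Finset.exists_eq_ite_of_sum_eq_one (show ∑ k ∈ s, (g k - f k) = 1 by omega)
  refine ⟨i, hi, j, hj, fun hij => ?_, fun k hk => ?_⟩
  · have h1 := hfg i hi
    have h2 := hgf i hi
    simp only [hij, if_true] at h1 h2
    omega
  · have h1 := hfg k hk
    have h2 := hgf k hk
    split_ifs at h1 h2 ⊢ <;> omega

lemma l1_eq_two_of_unit_move {f g : ℕ → ℕ} {i j : ℕ} (hij : i ≠ j)
    (h : ∀ k, g k + (if k = i then 1 else 0) = f k + (if k = j then 1 else 0)) : l1 f g = 2 := by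
  have hdist : ∀ k, Nat.dist (f k) (g k) = (if k = i then 1 else 0) + (if k = j then 1 else 0) :=
    fun k => by
      have := h k
      unfold Nat.dist
      split_ifs at this ⊢ <;> omega
  rw [l1, tsum_congr hdist, Summable.tsum_add (hasSum_ite_eq i 1).summable
    (hasSum_ite_eq j 1).summable, tsum_ite_eq, tsum_ite_eq]

lemma l1_comm (a b : ℕ → ℕ) : l1 a b = l1 b a :=
  tsum_congr fun _ => Nat.dist_comm _ _

-- The last conjunct of `Transfer P Q` is `Q.parts = moveUnit P.parts a b` up to unfolding.
def moveUnit (s : Multiset ℕ) (a b : ℕ) : Multiset ℕ :=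
  ((a - 1) ::ₘ (b + 1) ::ₘ (s.erase a).erase b).filter (0 < ·)

lemma countP_lt_moveUnit {s : Multiset ℕ} (hpos : ∀ x ∈ s, 0 < x) {a b : ℕ} (ha : a ∈ s)
    (hb : b ∈ s.erase a ∨ b = 0) (k : ℕ) :
    (moveUnit s a b).countP (k < ·) + (if k = a - 1 then 1 else 0) =
      s.countP (k < ·) + (if k = b then 1 else 0) := by
  have hs : s.countP (k < ·) = ((s.erase a).erase b).countP (k < ·) +
      (if k < a then 1 else 0) + (if k < b then 1 else 0) := by
    rw [← Multiset.cons_erase ha, Multiset.countP_cons, Multiset.erase_cons_head]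
    rcases hb with hb | rfl
    · rw [← Multiset.cons_erase hb, Multiset.countP_cons, Multiset.erase_cons_head]
      omega
    · rw [Multiset.erase_of_notMem fun h0 => (hpos 0 (Multiset.mem_of_mem_erase h0)).false]
      simp
  rw [moveUnit, Multiset.countP_lt_filter_pos, Multiset.countP_cons, Multiset.countP_cons, hs]
  have := hpos a ha
  split_ifs <;> omega

section Conjugate

variable {n : ℕ}

lemma conjFn_eq_conjFn_succ_add_count (P : Nat.Partition n) (k : ℕ) :
    conjFn P k = conjFn P (k + 1) + P.parts.count (k + 1) :=
  P.parts.countP_lt_eq_countP_succ_lt_add_count k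

lemma conjFn_injective : Function.Injective (conjFn (n := n)) := fun P Q h =>
  Nat.Partition.ext <| Multiset.eq_of_countP_lt_eq (fun _ => P.parts_pos) (fun _ => Q.parts_pos)
    (congrFun h)

lemma conjFn_eq_zero_of_le (P : Nat.Partition n) {k : ℕ} (hk : n ≤ k) : conjFn P k = 0 :=
  Multiset.countP_eq_zero.mpr fun p hp => by have := Nat.Partition.le_of_mem_parts hp; omega

lemma sum_range_conjFn (P : Nat.Partition n) : ∑ k ∈ Finset.range n, conjFn P k = n :=
  (Multiset.sum_range_countP_lt fun _ => Nat.Partition.le_of_mem_parts).trans P.parts_sum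

lemma l1_conjFn_eq_sum_range (P Q : Nat.Partition n) :
    l1 (conjFn P) (conjFn Q) = ∑ k ∈ Finset.range n, Nat.dist (conjFn P k) (conjFn Q k) :=
  tsum_eq_sum fun k hk => by
    rw [Finset.mem_range, not_lt] at hk
    rw [conjFn_eq_zero_of_le P hk, conjFn_eq_zero_of_le Q hk, Nat.dist_self]

end Conjugate

section Transfer

variable {n : ℕ} {lam mu : Nat.Partition n}

lemma exists_unit_move_of_transfer (h : Transfer lam mu) : ∃ i j, ∀ k,
    conjFn mu k + (if k = i then 1 else 0) = conjFn lam k + (if k = j then 1 else 0) := by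
  obtain ⟨a, b, ha, hb, hmu⟩ := h
  refine ⟨a - 1, b, fun k => ?_⟩
  rw [conjFn, conjFn, hmu]
  exact countP_lt_moveUnit (fun _ => lam.parts_pos) ha hb k

lemma l1_conjFn_eq_two_of_transfer (hne : lam ≠ mu) (h : Transfer lam mu) :
    l1 (conjFn lam) (conjFn mu) = 2 := by
  obtain ⟨i, j, hmove⟩ := exists_unit_move_of_transfer h
  refine l1_eq_two_of_unit_move (fun hij => hne (conjFn_injective (funext fun k => ?_))) hmove
  have := hmove k
  rw [hij] at this
  omega

lemma exists_unit_move_of_l1_conjFn_eq_two (h : l1 (conjFn lam) (conjFn mu) = 2) :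
    ∃ i j, i ≠ j ∧ ∀ k,
      conjFn mu k + (if k = i then 1 else 0) = conjFn lam k + (if k = j then 1 else 0) := by
  rw [l1_conjFn_eq_sum_range] at h
  obtain ⟨i, hi, j, hj, hij, hmove⟩ := exists_unit_move_of_sum_dist_eq_two
    ((sum_range_conjFn lam).trans (sum_range_conjFn mu).symm) h
  refine ⟨i, j, hij, fun k => ?_⟩
  by_cases hk : k < n
  · exact hmove k (Finset.mem_range.mpr hk)
  · rw [Finset.mem_range] at hi hj
    rw [conjFn_eq_zero_of_le lam (by omega), conjFn_eq_zero_of_le mu (by omega),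
      if_neg (by omega), if_neg (by omega)]

lemma transfer_of_unit_move {i j : ℕ} (hij : i ≠ j) (hmove : ∀ k,
    conjFn mu k + (if k = i then 1 else 0) = conjFn lam k + (if k = j then 1 else 0)) :
    Transfer lam mu := by
  have hcount := conjFn_eq_conjFn_succ_add_count lam
  have hmu := conjFn_eq_conjFn_succ_add_count mu
  -- The multiplicity of the part `k + 1` is `λ'_k - λ'_(k+1)`; the move makes it at least `1`
  -- at `k = i`, and at least `1 + [j = i + 1]` at `k = j - 1`.
  have ha : i + 1 ∈ lam.parts := by
    rw [← Multiset.count_pos]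
    have := hmove i; have := hmove (i + 1); have := hcount i; have := hmu i
    split_ifs at * <;> omega
  have hb : j ∈ lam.parts.erase (i + 1) ∨ j = 0 := by
    rcases j with _ | j
    · exact Or.inr rfl
    left
    rw [← Multiset.count_pos]
    have := hmove (j + 1); have := hmove j; have := hcount j; have := hmu j
    by_cases hji : j = i
    · subst hji
      rw [Multiset.count_erase_self]
      split_ifs at * <;> omega
    · rw [Multiset.count_erase_of_ne (by omega)]
      split_ifs at * <;> omega
  refine ⟨i + 1, j, ha, hb, ?_⟩
  show mu.parts = moveUnit lam.parts (i + 1) j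
  refine Multiset.eq_of_countP_lt_eq (fun _ => mu.parts_pos)
    (fun x hx => (Multiset.mem_filter.mp hx).2) fun k => ?_
  have := countP_lt_moveUnit (fun _ => lam.parts_pos) ha hb k
  have := hmove k
  simp only [conjFn, Nat.add_sub_cancel] at *
  omega

end Transfer

/-- adjacency in `G n` is equivalent to the conjugates being at
L¹ distance `2` (after padding with trailing zeros). -/
theorem stmt3 (n : ℕ) (lam mu : Nat.Partition n) :
    (G n).Adj lam mu ↔ l1 (conjFn lam) (conjFn mu) = 2 := by
  rw [G, SimpleGraph.fromRel_adj]
  constructor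
  · rintro ⟨hne, h | h⟩
    · exact l1_conjFn_eq_two_of_transfer hne h
    · rw [l1_comm]
      exact l1_conjFn_eq_two_of_transfer hne.symm h
  · intro h
    obtain ⟨i, j, hij, hmove⟩ := exists_unit_move_of_l1_conjFn_eq_two h
    refine ⟨fun he => ?_, Or.inl (transfer_of_unit_move hij hmove)⟩
    subst he
    simpa [hij] using hmove i
end

section
/- For every partition τ and every vertex λ of G_n, the degree of T_τ(λ) in G_{n+k} is at least the degree of λ in G_n. -/
lemma Tmap_injective {n k : ℕ} (τ : Nat.Partition k) :
    Function.Injective (Tmap τ (n := n)) := by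
  intro P Q h
  have : P.parts + τ.parts = Q.parts + τ.parts := congrArg Nat.Partition.parts h
  have hp : P.parts = Q.parts := by
    exact add_right_cancel this
  cases P; cases Q; simpa using hp

lemma transfer_tmap {n k : ℕ} (τ : Nat.Partition k) {P Q : Nat.Partition n}
    (h : Transfer P Q) : Transfer (Tmap τ P) (Tmap τ Q) := by
  obtain ⟨a, b, ha, hb, hQ⟩ := h
  have he1 : (P.parts + τ.parts).erase a = P.parts.erase a + τ.parts :=
    Multiset.erase_add_left_pos _ ha
  have he2 : (P.parts.erase a + τ.parts).erase b = (P.parts.erase a).erase b + τ.parts := by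
    rcases hb with hb | hb
    · exact Multiset.erase_add_left_pos _ hb
    · subst hb
      have h1 : (0:ℕ) ∉ P.parts.erase a + τ.parts := by
        intro hm
        rcases Multiset.mem_add.mp hm with hm | hm
        · exact absurd (P.parts_pos (Multiset.mem_of_mem_erase hm)) (lt_irrefl 0)
        · exact absurd (τ.parts_pos hm) (lt_irrefl 0)
      have h2 : (0:ℕ) ∉ (P.parts.erase a).erase 0 + τ.parts := by
        intro hm
        rcases Multiset.mem_add.mp hm with hm | hm
        · exact absurd (P.parts_pos (Multiset.mem_of_mem_erase (Multiset.mem_of_mem_erase hm)))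
            (lt_irrefl 0)
        · exact absurd (τ.parts_pos hm) (lt_irrefl 0)
      rw [Multiset.erase_of_notMem h1,
        Multiset.erase_of_notMem (fun hm => h1 (Multiset.mem_add.mpr (Or.inl hm)))]
  refine ⟨a, b, Multiset.mem_add.mpr (Or.inl ha), ?_, ?_⟩
  · rcases hb with hb | hb
    · left
      show b ∈ (P.parts + τ.parts).erase a
      rw [he1]
      exact Multiset.mem_add.mpr (Or.inl hb)
    · right; exact hb
  · show Q.parts + τ.parts = _
    have : ((P.parts + τ.parts).erase a).erase b = (P.parts.erase a).erase b + τ.parts := by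
      rw [he1, he2]
    simp only [Tmap]
    rw [this, ← Multiset.cons_add, ← Multiset.cons_add, Multiset.filter_add, hQ]
    congr 1
    exact (Multiset.filter_eq_self.mpr (fun x hx => by simpa using τ.parts_pos hx)).symm

lemma adj_tmap {n k : ℕ} (τ : Nat.Partition k) {P Q : Nat.Partition n}
    (h : (G n).Adj P Q) : (G (n + k)).Adj (Tmap τ P) (Tmap τ Q) := by
  rw [G, SimpleGraph.fromRel_adj] at h ⊢
  obtain ⟨hne, hr⟩ := h
  refine ⟨fun he => hne (Tmap_injective τ he), ?_⟩
  rcases hr with hr | hr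
  · exact Or.inl (transfer_tmap τ hr)
  · exact Or.inr (transfer_tmap τ hr)

/-- the degree of `T_τ λ` in `G (n+k)` is at least the degree of `λ` in `G n`. -/
theorem stmt9 (n k : ℕ) (τ : Nat.Partition k) (lam : Nat.Partition n) :
    ((G n).neighborSet lam).ncard ≤ ((G (n + k)).neighborSet (Tmap τ lam)).ncard := by
  calc ((G n).neighborSet lam).ncard
      = (Tmap τ '' ((G n).neighborSet lam)).ncard :=
        (Set.ncard_image_of_injective _ (Tmap_injective τ)).symm
    _ ≤ ((G (n + k)).neighborSet (Tmap τ lam)).ncard := by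
        apply Set.ncard_le_ncard
        · rintro _ ⟨Q, hQ, rfl⟩
          exact adj_tmap τ hQ
        · exact Set.toFinite _
end
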